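/- arXiv:1904.12065 — 2 statements merged into one kernel-verified Lean document; each statement's English description precedes it below -/
import Mathlib

section
/- Uniqueness of path lifts: if p: G̃ → G is a covering graph and f̃, g̃: I_∞ → G̃ are graph homomorphisms with p∘f̃ = p∘g̃ = f for a stable f starting at v₀, and both f̃ and g̃ equal the same vertex ṽ₀ ∈ p⁻¹(v₀) at m₀(f,-1) and are constant before it, then f̃ = g̃. -/
/-- A graph homomorphism in the A-homotopy sense: adjacent vertices map to
equal or adjacent vertices. -/
def IsGraphHom {V W : Type*} (G : SimpleGraph V) (H : SimpleGraph W) (f : V → W) : Prop :=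
  ∀ ⦃u v : V⦄, G.Adj u v → f u = f v ∨ H.Adj (f u) (f v)

/-- The infinite path graph `I_∞` on `ℤ`. -/
def pathGraphZ : SimpleGraph ℤ where
  Adj i j := i ≠ j ∧ (j = i + 1 ∨ i = j + 1)
  symm := ⟨fun i j h => ⟨h.1.symm, h.2.symm⟩⟩
  loopless := ⟨fun i h => h.1 rfl⟩

/-- The Cartesian (box) product `I_∞ □ I_∞` on `ℤ × ℤ`. -/
def gridGraphZ : SimpleGraph (ℤ × ℤ) where
  Adj p q := p ≠ q ∧ ((p.1 = q.1 ∧ pathGraphZ.Adj p.2 q.2) ∨ (p.2 = q.2 ∧ pathGraphZ.Adj p.1 q.1))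
  symm := ⟨fun p q h =>
    ⟨h.1.symm, h.2.imp (fun hc => ⟨hc.1.symm, hc.2.symm⟩) (fun hc => ⟨hc.1.symm, hc.2.symm⟩)⟩⟩
  loopless := ⟨fun p h => h.1 rfl⟩

/-- The Cartesian product `G □ I_∞` on `V × ℤ`. -/
def boxZ {V : Type*} (G : SimpleGraph V) : SimpleGraph (V × ℤ) where
  Adj p q := p ≠ q ∧ ((p.1 = q.1 ∧ pathGraphZ.Adj p.2 q.2) ∨ (p.2 = q.2 ∧ G.Adj p.1 q.1))
  symm := ⟨fun p q h =>
    ⟨h.1.symm, h.2.imp (fun hc => ⟨hc.1.symm, hc.2.symm⟩) (fun hc => ⟨hc.1.symm, hc.2.symm⟩)⟩⟩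
  loopless := ⟨fun p h => h.1 rfl⟩

/-- The cycle graph `C_n` on `ZMod n`. -/
def cycleGraph (n : ℕ) : SimpleGraph (ZMod n) where
  Adj a b := a ≠ b ∧ (a = b + 1 ∨ b = a + 1)
  symm := ⟨fun a b h => ⟨h.1.symm, h.2.symm⟩⟩
  loopless := ⟨fun a h => h.1 rfl⟩

/-- The one-vertex graph `*`. -/
def oneVertexGraph : SimpleGraph Unit := ⊥

/-- `f` is constant on integers `≤ m`. -/
def IsStabNegAt {V : Type*} (f : ℤ → V) (m : ℤ) : Prop := ∀ i ≤ m, f i = f m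

/-- `f` is constant on integers `≥ m`. -/
def IsStabPosAt {V : Type*} (f : ℤ → V) (m : ℤ) : Prop := ∀ i, m ≤ i → f i = f m

/-- `m` is the greatest integer below which `f` is constant: `m = m₀(f,-1)`. -/
def M0Neg {V : Type*} (f : ℤ → V) (m : ℤ) : Prop :=
  IsStabNegAt f m ∧ ∀ m', IsStabNegAt f m' → m' ≤ m

/-- `m` is the least integer above which `f` is constant: `m = m₀(f,+1)`. -/
def M0Pos {V : Type*} (f : ℤ → V) (m : ℤ) : Prop :=
  IsStabPosAt f m ∧ ∀ m', IsStabPosAt f m' → m ≤ m'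

/-- A stable graph homomorphism `I_∞ → G`. -/
def StableHomZ {V : Type*} (G : SimpleGraph V) (f : ℤ → V) : Prop :=
  IsGraphHom pathGraphZ G f ∧ (∃ m, IsStabNegAt f m) ∧ (∃ m, IsStabPosAt f m)

/-- The A-homotopy relation of Babson et al. on stable maps `I_∞ → G`:
`f` and `g` share their end values `vneg`, `vpos`, and there is a stable graph
homomorphism `H : I_∞² → G` stabilizing in the first axis to the constant end
values and to `f` (resp. `g`) in the negative (resp. positive) second direction. -/
def AHomotopicZ {V : Type*} (G : SimpleGraph V) (f g : ℤ → V) : Prop :=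
  ∃ (vneg vpos : V) (H : ℤ × ℤ → V), IsGraphHom gridGraphZ G H ∧
    (∃ m, ∀ i ≤ m, f i = vneg ∧ g i = vneg) ∧
    (∃ m, ∀ i, m ≤ i → f i = vpos ∧ g i = vpos) ∧
    (∃ m, ∀ a ≤ m, ∀ j : ℤ, H (a, j) = vneg) ∧
    (∃ m, ∀ a, m ≤ a → ∀ j : ℤ, H (a, j) = vpos) ∧
    (∃ m, ∀ j ≤ m, ∀ a : ℤ, H (a, j) = f a) ∧
    (∃ m, ∀ j, m ≤ j → ∀ a : ℤ, H (a, j) = g a)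

/-- A-homotopy of graph homomorphisms `G → H` via a finite cylinder `G □ I_n`
(encoded as a homotopy on `G □ I_∞` that is constantly `f` for times `≤ 0` and
constantly `g` for times `≥ n`). -/
def AHomotopicFin {V W : Type*} (G : SimpleGraph V) (H : SimpleGraph W) (f g : V → W) : Prop :=
  ∃ (n : ℕ) (Φ : V × ℤ → W), IsGraphHom (boxZ G) H Φ ∧
    (∀ v : V, ∀ i ≤ (0 : ℤ), Φ (v, i) = f v) ∧
    (∀ v : V, ∀ i : ℤ, (n : ℤ) ≤ i → Φ (v, i) = g v)

/-- Based A-homotopy: as `AHomotopicFin`, additionally fixing the base vertex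
`v0 ↦ w0` at all times. -/
def AHomotopicBased {V W : Type*} (G : SimpleGraph V) (H : SimpleGraph W)
    (v0 : V) (w0 : W) (f g : V → W) : Prop :=
  ∃ (n : ℕ) (Φ : V × ℤ → W), IsGraphHom (boxZ G) H Φ ∧
    (∀ v : V, ∀ i ≤ (0 : ℤ), Φ (v, i) = f v) ∧
    (∀ v : V, ∀ i : ℤ, (n : ℤ) ≤ i → Φ (v, i) = g v) ∧
    (∀ i : ℤ, Φ (v0, i) = w0)

/-- Concatenation `f · g`, where `mf = m₀(f,-1)` and `mg = m₀(g,+1)`. -/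
def concatZ {V : Type*} (f g : ℤ → V) (mf mg : ℤ) : ℤ → V :=
  fun a => if 0 ≤ a then f (a + mf) else g (a + mg)

/-- The closed neighborhood `N[v]`. -/
def nbhd {V : Type*} (G : SimpleGraph V) (v : V) : Set V := {u | u = v ∨ G.Adj u v}

/-- A covering graph map: a surjective local isomorphism. -/
def IsCoveringMap' {V W : Type*} (Gt : SimpleGraph V) (G : SimpleGraph W) (p : V → W) : Prop :=
  IsGraphHom Gt G p ∧ Function.Surjective p ∧
    ∀ w : V, Set.BijOn p (nbhd Gt w) (nbhd G (p w))

/-- A based loop in `B₁(G, x₀)`: a graph homomorphism `I_∞ → G` equal to `x₀`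
outside a finite region. -/
def IsLoopAt {V : Type*} (G : SimpleGraph V) (x0 : V) (γ : ℤ → V) : Prop :=
  IsGraphHom pathGraphZ G γ ∧ ∃ a b : ℤ, ∀ i : ℤ, (i < a ∨ b < i) → γ i = x0

/-- The 5-cycle. -/
def C5 : SimpleGraph (ZMod 5) := cycleGraph 5

/-- The covering map `p₅ : I_∞ → C₅`, reduction mod 5. -/
def p5 : ℤ → ZMod 5 := fun i => (i : ZMod 5)

/-- The standard loop `γ_n` winding `n` times around `C₅`. -/
def gammaC5 (n : ℤ) : ℤ → ZMod 5 := fun i =>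
  if 0 ≤ n then (if i ≤ 0 then 0 else if i ≤ 5 * n then (i : ZMod 5) else 0)
  else (if i ≤ 0 then 0 else if i ≤ -(5 * n) then ((-i : ℤ) : ZMod 5) else 0)

/-- The standard lift `γ̃_n : I_∞ → I_∞` of `γ_n`, starting at `0` and ending at `5n`. -/
def gammaLift (n : ℤ) : ℤ → ℤ := fun i =>
  if i ≤ 0 then 0 else if i ≤ 5 * |n| then (if 0 ≤ n then i else -i) else 5 * n

theorem IsGraphHom.mem_nbhd {V W : Type*} {G : SimpleGraph V} {H : SimpleGraph W} {f : V → W}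
    (hf : IsGraphHom G H f) {u v : V} (huv : G.Adj u v) : f v ∈ nbhd H (f u) :=
  (hf huv).imp Eq.symm SimpleGraph.Adj.symm

namespace IsCoveringMap'

variable {U V W : Type*} {H : SimpleGraph U} {Gt : SimpleGraph V} {G : SimpleGraph W} {p : V → W}

/-- Both values at `v` lie in `N[ft u]`, on which `p` is injective. -/
theorem eq_of_comp_eq_of_adj {ft gt : U → V} (hp : IsCoveringMap' Gt G p)
    (hft : IsGraphHom H Gt ft) (hgt : IsGraphHom H Gt gt) (hcomp : p ∘ ft = p ∘ gt)
    {u v : U} (huv : H.Adj u v) (hu : ft u = gt u) : ft v = gt v :=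
  (hp.2.2 (ft u)).injOn (hft.mem_nbhd huv) (hu ▸ hgt.mem_nbhd huv) (congrFun hcomp v)

theorem eq_of_comp_eq {ft gt : ℤ → V} (hp : IsCoveringMap' Gt G p)
    (hft : IsGraphHom pathGraphZ Gt ft) (hgt : IsGraphHom pathGraphZ Gt gt)
    (hcomp : p ∘ ft = p ∘ gt) {m : ℤ} (hm : ft m = gt m) : ft = gt := by
  funext i
  induction i using Int.inductionOn' (b := m) with
  | zero => exact hm
  | succ k _ hk =>
    exact hp.eq_of_comp_eq_of_adj hft hgt hcomp ⟨by omega, Or.inl rfl⟩ hk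
  | pred k _ hk =>
    exact hp.eq_of_comp_eq_of_adj hft hgt hcomp ⟨by omega, Or.inr (by omega)⟩ hk

end IsCoveringMap'

theorem path_lift_unique_general {V W : Type*} (Gt : SimpleGraph V) (G : SimpleGraph W) (p : V → W)
    (hp : IsCoveringMap' Gt G p) (f : ℤ → W) (mf : ℤ)
    (v0t : V)
    (ft gt : ℤ → V)
    (hft : IsGraphHom pathGraphZ Gt ft) (hgt : IsGraphHom pathGraphZ Gt gt)
    (hpf : ∀ i : ℤ, p (ft i) = f i) (hpg : ∀ i : ℤ, p (gt i) = f i)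
    (hf0 : ∀ i ≤ mf, ft i = v0t) (hg0 : ∀ i ≤ mf, gt i = v0t) :
    ft = gt :=
  hp.eq_of_comp_eq hft hgt (funext fun i => (hpf i).trans (hpg i).symm)
    ((hf0 mf le_rfl).trans (hg0 mf le_rfl).symm)

/-- Uniqueness of path lifts through a covering graph. -/
theorem path_lift_unique {V W : Type*} (Gt : SimpleGraph V) (G : SimpleGraph W) (p : V → W)
    (hp : IsCoveringMap' Gt G p) (f : ℤ → W) (mf : ℤ)
    (hf : IsGraphHom pathGraphZ G f) (hfn : IsStabNegAt f mf)
    (hfp : ∃ m, IsStabPosAt f m)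
    (v0t : V) (hv : p v0t = f mf)
    (ft gt : ℤ → V)
    (hft : IsGraphHom pathGraphZ Gt ft) (hgt : IsGraphHom pathGraphZ Gt gt)
    (hpf : ∀ i : ℤ, p (ft i) = f i) (hpg : ∀ i : ℤ, p (gt i) = f i)
    (hf0 : ∀ i ≤ mf, ft i = v0t) (hg0 : ∀ i ≤ mf, gt i = v0t) :
    ft = gt :=
  path_lift_unique_general Gt G p hp f mf v0t ft gt hft hgt hpf hpg hf0 hg0
end

section
/- General Padding Lemma: Let f: I_∞ → G be a stable graph homomorphism, and let b be an integer with m₀(f,-1) < b < m₀(f,+1), and n, m ∈ ℕ. Define f' by f'(i) = f(i−m) for i ≥ b+m, f'(i) = f(b) for b−n ≤ i ≤ b+m, and f'(i) = f(i+n) for i ≤ b−n. Then f' is a stable graph homomorphism and f ∼ f' (they are A-homotopic). -/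
/-- The padded path: `f'` inserts `n + m` repetitions of `f b` around `b`. -/
def paddedPath {V : Type*} (f : ℤ → V) (b : ℤ) (n m : ℕ) : ℤ → V :=
  fun i => if b + (m : ℤ) ≤ i then f (i - m) else if b - (n : ℤ) ≤ i then f b else f (i + n)

/-!
The padded path is `f ∘ r` for a reindexing `r : ℤ → ℤ` that moves by at most one along each edge,
i.e. a graph homomorphism `I_∞ → I_∞`. The homotopy is `f` composed with a reindexing `ℤ² → ℤ` that
inserts the padding one vertex per unit of time, first on the left of `b` and then on the right;
every grid edge again moves the index by at most one, so the composite is a graph homomorphism, and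
far to the left or right the index stays beyond the stabilization points of `f`.
-/

section Padding

variable {V : Type*}

theorem IsGraphHom.comp {U W : Type*} {G : SimpleGraph U} {H : SimpleGraph V}
    {K : SimpleGraph W} {g : V → W} {f : U → V} (hg : IsGraphHom H K g)
    (hf : IsGraphHom G H f) : IsGraphHom G K (g ∘ f) := by
  intro u v huv
  rcases hf huv with h | h
  · exact Or.inl (congrArg g h)
  · exact hg h

-- `i + p` below `b - p`, constantly `b` on `[b - p, b + q]`, and `i - q` above `b + q`.
def padIndex (b : ℤ) (p q : ℕ) (i : ℤ) : ℤ := max (min (i + p) b) (i - q)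

theorem paddedPath_eq_comp (f : ℤ → V) (b : ℤ) (p q : ℕ) :
    paddedPath f b p q = f ∘ padIndex b p q := by
  funext i
  simp only [paddedPath, padIndex, Function.comp_apply]
  split_ifs <;> congr 1 <;> omega

theorem isGraphHom_padIndex (b : ℤ) (p q : ℕ) :
    IsGraphHom pathGraphZ pathGraphZ (padIndex b p q) := by
  intro i j hij
  simp only [pathGraphZ, padIndex] at hij ⊢
  omega

-- At time `j` the padding is `min j n` on the left and `min (j - n) m` on the right (both clamped
-- at `0`): it grows one step at a time, first on the left and then on the right.
def padHomotopyIndex (b : ℤ) (n m : ℕ) (x : ℤ × ℤ) : ℤ :=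
  padIndex b (min x.2.toNat n) (min (x.2 - n).toNat m) x.1

theorem isGraphHom_padHomotopyIndex (b : ℤ) (n m : ℕ) :
    IsGraphHom gridGraphZ pathGraphZ (padHomotopyIndex b n m) := by
  rintro ⟨a, j⟩ ⟨a', j'⟩ h
  simp only [gridGraphZ, pathGraphZ, padHomotopyIndex, padIndex] at h ⊢
  omega

variable {b : ℤ} {n m : ℕ}

theorem padHomotopyIndex_of_nonpos {j : ℤ} (hj : j ≤ 0) (a : ℤ) :
    padHomotopyIndex b n m (a, j) = a := by
  simp only [padHomotopyIndex, padIndex]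
  omega

theorem padHomotopyIndex_of_ge {j : ℤ} (hj : n + m ≤ j) (a : ℤ) :
    padHomotopyIndex b n m (a, j) = padIndex b n m a := by
  simp only [padHomotopyIndex, padIndex]
  omega

theorem padHomotopyIndex_le {s a : ℤ} (ha : a ≤ min s b - n) (j : ℤ) :
    padHomotopyIndex b n m (a, j) ≤ s := by
  simp only [padHomotopyIndex, padIndex]
  omega

theorem le_padHomotopyIndex {s a : ℤ} (ha : max s b + m ≤ a) (j : ℤ) :
    s ≤ padHomotopyIndex b n m (a, j) := by
  simp only [padHomotopyIndex, padIndex]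
  omega

end Padding

theorem general_padding_general {V : Type*} (G : SimpleGraph V) (f : ℤ → V)
    (mneg mpos b : ℤ) (n m : ℕ)
    (hf : IsGraphHom pathGraphZ G f) (hmn : M0Neg f mneg) (hmp : M0Pos f mpos) :
    StableHomZ G (paddedPath f b n m) ∧ AHomotopicZ G f (paddedPath f b n m) := by
  set H := f ∘ padHomotopyIndex b n m
  have hH : IsGraphHom gridGraphZ G H := hf.comp (isGraphHom_padHomotopyIndex b n m)
  have hstart : ∀ j ≤ 0, ∀ a, H (a, j) = f a := fun j hj a => by
    simp only [H, Function.comp_apply, padHomotopyIndex_of_nonpos hj]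
  have hend : ∀ j : ℤ, n + m ≤ j → ∀ a, H (a, j) = paddedPath f b n m a := fun j hj a => by
    simp only [H, paddedPath_eq_comp, Function.comp_apply, padHomotopyIndex_of_ge hj]
  have hneg : ∀ a ≤ min mneg b - n, ∀ j, H (a, j) = f mneg :=
    fun a ha j => hmn.1 _ (padHomotopyIndex_le ha j)
  have hpos : ∀ a, max mpos b + m ≤ a → ∀ j, H (a, j) = f mpos :=
    fun a ha j => hmp.1 _ (le_padHomotopyIndex ha j)
  have hpadNeg : ∀ a ≤ min mneg b - n, paddedPath f b n m a = f mneg := fun a ha => by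
    rw [← hend _ le_rfl, hneg a ha]
  have hpadPos : ∀ a, max mpos b + m ≤ a → paddedPath f b n m a = f mpos := fun a ha => by
    rw [← hend _ le_rfl, hpos a ha]
  refine ⟨⟨paddedPath_eq_comp f b n m ▸ hf.comp (isGraphHom_padIndex b n m),
      ⟨_, fun a ha => by rw [hpadNeg a ha, hpadNeg _ le_rfl]⟩,
      ⟨_, fun a ha => by rw [hpadPos a ha, hpadPos _ le_rfl]⟩⟩,
    f mneg, f mpos, H, hH,
    ⟨_, fun a ha => ⟨hmn.1 a (by omega), hpadNeg a ha⟩⟩,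
    ⟨_, fun a ha => ⟨hmp.1 a (by omega), hpadPos a ha⟩⟩,
    ⟨_, hneg⟩, ⟨_, hpos⟩, ⟨_, hstart⟩, ⟨_, hend⟩⟩

/-- General Padding Lemma: a stable path is A-homotopic to the same path with
padding inserted at an interior point `b`, `m₀(f,-1) < b < m₀(f,+1)`. -/
theorem general_padding {V : Type*} (G : SimpleGraph V) (f : ℤ → V)
    (mneg mpos b : ℤ) (n m : ℕ)
    (hf : IsGraphHom pathGraphZ G f) (hmn : M0Neg f mneg) (hmp : M0Pos f mpos)
    (hb1 : mneg < b) (hb2 : b < mpos) :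
    StableHomZ G (paddedPath f b n m) ∧ AHomotopicZ G f (paddedPath f b n m) :=
  general_padding_general G f mneg mpos b n m hf hmn hmp
end
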